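/- In the free group F_2 = ⟨α, β⟩, for every m ≥ 2 the element α^2 β^m α β^m is not primitive. -/

import Mathlib

universe u

/-- `w` is a *primitive* element of the subgroup `H`: it is a member of some free basis of `H`. -/
def IsPrimitiveIn {F : Type u} [Group F] (H : Subgroup F) (w : F) : Prop :=
  ∃ (S : Type u) (b : FreeGroupBasis S H) (i : S), (b i : F) = w

/-- `w` is a primitive element of the group `F`: it is a member of some free basis of `F`. -/
def IsPrimitive {F : Type u} [Group F] (w : F) : Prop :=
  ∃ (S : Type u) (b : FreeGroupBasis S F) (i : S), b i = w

/-- The imprimitivity rank of `w`: the minimal rank of a finitely generated subgroup of `F`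
containing `w` in which `w` is not primitive, or `∞` if no such subgroup exists. -/
noncomputable def irank {F : Type u} [Group F] (w : F) : ℕ∞ :=
  sInf {n : ℕ∞ | ∃ m : ℕ, n = (m : ℕ∞) ∧ ∃ H : Subgroup F,
    Nonempty (FreeGroupBasis (Fin m) H) ∧ w ∈ H ∧ ¬ IsPrimitiveIn H w}

/-!
A primitive element `w` of `F₂` is part of a basis `{w, v}`, so every homomorphism killing `w`
has cyclic image, generated by the image of `v`. The element `α² βᵐ α βᵐ` becomes `α³` once
`βᵐ` is killed, so it is killed by the homomorphism to `SL(2, ℤ/m)` sending `α` to an element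
of order three and `β` to the transvection `[[1, 1], [0, 1]]`; these two matrices do not commute
as soon as `m ≠ 1`.
-/

namespace FreeGroupBasis

variable {ι F G : Type*} [Group F] [Group G]

theorem range_le_zpowers (b : FreeGroupBasis ι F) {i j : ι} (hk : ∀ k, k = i ∨ k = j)
    (φ : F →* G) (hφ : φ (b i) = 1) : φ.range ≤ Subgroup.zpowers (φ (b j)) := by
  have hlift : φ.comp b.repr.symm.toMonoidHom = FreeGroup.lift (φ ∘ b) :=
    FreeGroup.ext_hom _ _ fun k => by simp; rfl
  rintro _ ⟨x, rfl⟩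
  have hx : φ x = FreeGroup.lift (φ ∘ b) (b.repr x) := by rw [← hlift]; simp
  rw [hx]
  refine FreeGroup.range_lift_le ?_ ⟨_, rfl⟩
  rintro _ ⟨k, rfl⟩
  rcases hk k with rfl | rfl
  · simp [hφ, one_mem]
  · exact Subgroup.mem_zpowers _

end FreeGroupBasis

theorem IsPrimitive.commute_of_map_eq_one {α : Type u} {G : Type*} [Group G]
    (hα : Nat.card α = 2) {w : FreeGroup α} (hw : IsPrimitive w) (φ : FreeGroup α →* G)
    (hφ : φ w = 1) (x y : FreeGroup α) : Commute (φ x) (φ y) := by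
  obtain ⟨S, b, i, rfl⟩ := hw
  have hS : Nat.card S = 2 := by rw [← Nat.card_congr (Equiv.ofFreeGroupEquiv b.repr), hα]
  obtain ⟨j, hji, hj⟩ := (Nat.card_eq_two_iff' i).1 hS
  have hrange := b.range_le_zpowers (fun k => or_iff_not_imp_left.2 (hj k)) φ hφ
  obtain ⟨n, hn⟩ := Subgroup.mem_zpowers_iff.1 (hrange ⟨x, rfl⟩)
  obtain ⟨k, hk⟩ := Subgroup.mem_zpowers_iff.1 (hrange ⟨y, rfl⟩)
  rw [← hn, ← hk]
  exact Commute.zpow_zpow_self _ _ _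

namespace Matrix.SpecialLinearGroup

open MatrixGroups

variable {R : Type*} [CommRing R]

theorem transvection_pow {ι : Type*} [DecidableEq ι] [Fintype ι] {i j : ι} (hij : i ≠ j)
    (c : R) (n : ℕ) : transvection hij c ^ n = transvection hij (n * c) := by
  induction n with
  | zero => simp
  | succ n ih => rw [pow_succ, ih, ← transvection_add]; congr 1; push_cast; ring

theorem exists_pow_three_eq_one_not_commute_transvection {c : R} (hc : c ≠ 0) :
    ∃ a : SL(2, R), a ^ 3 = 1 ∧ ¬Commute a (transvection zero_ne_one c) := by
  let a : SL(2, R) := ⟨!![0, -1; 1, -1], by simp [det_fin_two_of]⟩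
  have ha : (a : Matrix (Fin 2) (Fin 2) R) = !![0, -1; 1, -1] := rfl
  refine ⟨a, Subtype.ext ?_, fun h => hc ?_⟩
  · simp [ha, pow_succ, one_fin_two]
  · have h00 := congr_arg (fun g : SL(2, R) => (g : Matrix (Fin 2) (Fin 2) R) 0 0) h.eq
    simpa [coe_mul, ha, transvection_coe, mul_apply, Fin.sum_univ_two] using h00.symm

theorem exists_pow_three_eq_one_pow_eq_one_not_commute {m : ℕ} (hm : m ≠ 1) :
    ∃ a b : SL(2, ZMod m), a ^ 3 = 1 ∧ b ^ m = 1 ∧ ¬Commute a b := by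
  have := ZMod.nontrivial_iff.2 hm
  obtain ⟨a, ha, hab⟩ := exists_pow_three_eq_one_not_commute_transvection (one_ne_zero (α := ZMod m))
  exact ⟨a, _, ha, by simp [transvection_pow], hab⟩

end Matrix.SpecialLinearGroup

/-- In the free group `F₂ = ⟨α, β⟩`, for every `m ≥ 2` the element `α² β^m α β^m` is not
primitive. -/
theorem not_primitive_a2_bm_a_bm (m : ℕ) (hm : 2 ≤ m) :
    ¬ IsPrimitive ((FreeGroup.of 0 : FreeGroup (Fin 2)) ^ 2 * (FreeGroup.of 1) ^ m *
        FreeGroup.of 0 * (FreeGroup.of 1) ^ m) := by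
  obtain ⟨a, b, ha, hb, hab⟩ :=
    Matrix.SpecialLinearGroup.exists_pow_three_eq_one_pow_eq_one_not_commute (by omega : m ≠ 1)
  intro hw
  have hφw : FreeGroup.lift ![a, b] (.of 0 ^ 2 * .of 1 ^ m * .of 0 * .of 1 ^ m) = 1 := by
    simp [hb, ← pow_succ, ha]
  exact hab (by simpa using hw.commute_of_map_eq_one (by simp) _ hφw (.of 0) (.of 1))
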